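/- arXiv:1101.1199 — 3 statements merged into one kernel-verified Lean document; each statement's English description precedes it below -/
import Mathlib

section
/- Let 0 < σ₁ < 1/2 and define ψ(u) = u/(1−σ₁) − ∑_{n<u} (1−n/u)^{−σ₁} for u > 0. Then for every k ≥ 1, ∫_k^{k+1} |u^{1−σ₁}/(1−σ₁) − ∑_{n=1}^{k} (u−n)^{−σ₁}|² du ≤ ∫_0^1 ((u+1)^{1−σ₁}/(1−σ₁) + u^{−σ₁})² du, and this bound is finite and independent of k. -/
/-!
Write `t = u - k` and `p = 1 - σ`. The tangent-line bounds for the concave function `x ↦ x ^ p`,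
`p (a + 1) ^ (-σ) ≤ (a + 1) ^ p - a ^ p ≤ p a ^ (-σ)`, telescope along the sum over `n` and trap
the integrand's inner function between `t ^ p / p - t ^ (-σ)` and `t ^ p / p`. Its square is
therefore at most `((t + 1) ^ p / p + t ^ (-σ)) ^ 2`, whose integral over `t ∈ (0, 1)` is finite
since `σ < 1 / 2` makes `t ^ (-σ)` square integrable there.
-/

open MeasureTheory Set

lemma rpow_le_rpow_add_mul_sub {p x y : ℝ} (hp0 : 0 ≤ p) (hp1 : p ≤ 1) (hx : 0 < x) (hy : 0 ≤ y) :
    y ^ p ≤ x ^ p + p * x ^ (p - 1) * (y - x) := by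
  have hbern := rpow_one_add_le_one_add_mul_self
    (by linarith [div_nonneg hy hx.le] : -1 ≤ y / x - 1) hp0 hp1
  rw [add_sub_cancel, Real.div_rpow hy hx.le, div_le_iff₀ (by positivity)] at hbern
  calc y ^ p ≤ (1 + p * (y / x - 1)) * x ^ p := hbern
    _ = x ^ p + p * (x ^ p / x) * (y - x) := by field_simp
    _ = _ := by rw [Real.rpow_sub_one hx.ne']

noncomputable def rpowDefect (σ : ℝ) (m : ℕ) (u : ℝ) : ℝ :=
  u ^ (1 - σ) / (1 - σ) - ∑ n ∈ Finset.Icc 1 m, (u - n) ^ (-σ)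

section rpowDefect

variable {σ u : ℝ}

lemma rpowDefect_zero : rpowDefect σ 0 u = u ^ (1 - σ) / (1 - σ) := by
  simp [rpowDefect]

lemma rpowDefect_succ (m : ℕ) :
    rpowDefect σ (m + 1) u = rpowDefect σ m u - (u - (m + 1)) ^ (-σ) := by
  rw [rpowDefect, rpowDefect, Finset.sum_Icc_succ_top (by omega)]
  push_cast
  ring

lemma rpowDefect_le (h0 : 0 ≤ σ) (h1 : σ < 1) {m : ℕ} (hu : m < u) :
    rpowDefect σ m u ≤ (u - m) ^ (1 - σ) / (1 - σ) := by
  induction m with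
  | zero => simp [rpowDefect_zero]
  | succ m ih =>
    push_cast at hu ⊢
    have tangent := rpow_le_rpow_add_mul_sub (p := 1 - σ) (x := u - (m + 1)) (y := u - m)
      (by linarith) (by linarith) (by linarith) (by linarith)
    rw [show 1 - σ - 1 = -σ by ring] at tangent
    have hprev := ih (by linarith)
    rw [rpowDefect_succ, le_div_iff₀ (by linarith)]
    rw [le_div_iff₀ (by linarith)] at hprev
    nlinarith

lemma sub_le_rpowDefect (h0 : 0 ≤ σ) (h1 : σ < 1) {m : ℕ} (hu : m < u) :
    (u - m) ^ (1 - σ) / (1 - σ) - (u - m) ^ (-σ) ≤ rpowDefect σ m u := by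
  induction m with
  | zero =>
    simpa [rpowDefect_zero] using Real.rpow_nonneg (by linarith : (0 : ℝ) ≤ u) (-σ)
  | succ m ih =>
    push_cast at hu ⊢
    have tangent := rpow_le_rpow_add_mul_sub (p := 1 - σ) (x := u - m) (y := u - (m + 1))
      (by linarith) (by linarith) (by linarith) (by linarith)
    rw [show 1 - σ - 1 = -σ by ring] at tangent
    have hprev := ih (by linarith)
    rw [rpowDefect_succ]
    suffices (u - (m + 1)) ^ (1 - σ) / (1 - σ) ≤ rpowDefect σ m u by linarith
    rw [div_le_iff₀ (by linarith)]
    rw [sub_le_iff_le_add, div_le_iff₀ (by linarith)] at hprev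
    nlinarith

lemma sq_rpowDefect_le (h0 : 0 ≤ σ) (h1 : σ < 1) {m : ℕ} (hu : m < u) :
    rpowDefect σ m u ^ 2 ≤ ((u - m + 1) ^ (1 - σ) / (1 - σ) + (u - m) ^ (-σ)) ^ 2 := by
  have ht : 0 < u - m := by linarith
  have hp : 0 < 1 - σ := by linarith
  have h_mono : (u - m) ^ (1 - σ) / (1 - σ) ≤ (u - m + 1) ^ (1 - σ) / (1 - σ) := by
    gcongr; linarith
  have h_nonneg : 0 ≤ (u - m) ^ (1 - σ) / (1 - σ) := by positivity
  have h_nonneg' : 0 ≤ (u - m) ^ (-σ) := by positivity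
  apply sq_le_sq'
  · linarith [sub_le_rpowDefect h0 h1 hu]
  · linarith [rpowDefect_le h0 h1 hu]

end rpowDefect

lemma memLp_two_rpow_neg {σ : ℝ} (hσ : σ < 1 / 2) :
    MemLp (fun t : ℝ ↦ t ^ (-σ)) 2 (volume.restrict (Ioo 0 1)) := by
  have hmeas : AEStronglyMeasurable (fun t : ℝ ↦ t ^ (-σ)) (volume.restrict (Ioo 0 1)) := by
    fun_prop
  rw [memLp_two_iff_integrable_sq hmeas]
  have hsq : IntegrableOn (fun t : ℝ ↦ t ^ (-σ * 2)) (Ioo 0 1) :=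
    (intervalIntegral.integrableOn_Ioo_rpow_iff zero_lt_one).2 (by linarith)
  refine hsq.congr_fun (fun t ht ↦ ?_) measurableSet_Ioo
  exact_mod_cast Real.rpow_mul_natCast ht.1.le (-σ) 2

lemma integrableOn_sq_add_rpow_neg {σ : ℝ} (hσ : σ < 1 / 2) :
    IntegrableOn (fun t : ℝ ↦ ((t + 1) ^ (1 - σ) / (1 - σ) + t ^ (-σ)) ^ 2) (Ioo 0 1) := by
  have hmono : MonotoneOn (fun t : ℝ ↦ (t + 1) ^ (1 - σ) / (1 - σ)) (Icc 0 1) := by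
    intro s hs t _ hst
    have : 0 < 1 - σ := by linarith
    dsimp only
    gcongr
    linarith [hs.1]
  have := (hmono.memLp_isCompact (p := 2) (μ := volume) isCompact_Icc).mono_measure
    (Measure.restrict_mono Ioo_subset_Icc_self le_rfl)
  exact (this.add (memLp_two_rpow_neg hσ)).integrable_sq

lemma integral_Ioc_comp_sub (f : ℝ → ℝ) (a : ℝ) :
    ∫ u in Ioc a (a + 1), f (u - a) = ∫ t in Ioo 0 1, f t := by
  rw [← intervalIntegral.integral_of_le (by linarith), intervalIntegral.integral_comp_sub_right,
    sub_self, add_sub_cancel_left, intervalIntegral.integral_of_le zero_le_one,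
    integral_Ioc_eq_integral_Ioo]

lemma integrableOn_Ioc_comp_sub {f : ℝ → ℝ} (hf : IntegrableOn f (Ioo 0 1)) (a : ℝ) :
    IntegrableOn (fun u ↦ f (u - a)) (Ioc a (a + 1)) := by
  rw [← intervalIntegrable_iff_integrableOn_Ioo_of_le zero_le_one] at hf
  have := hf.comp_sub_right a
  rwa [zero_add, add_comm, intervalIntegrable_iff_integrableOn_Ioc_of_le (by linarith)] at this

theorem stmt8_general (σ₁ : ℝ) (h0 : 0 < σ₁) (h1 : σ₁ < 1/2) (k : ℕ) :
    (∫ u in Set.Ioc (k : ℝ) (k+1),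
        (u^(1-σ₁)/(1-σ₁) - ∑ n ∈ Finset.Icc 1 k, (u - (n:ℝ))^(-σ₁))^2)
      ≤ (∫ u in Set.Ioo (0:ℝ) 1, ((u+1)^(1-σ₁)/(1-σ₁) + u^(-σ₁))^2)
    ∧ IntegrableOn (fun u : ℝ => ((u+1)^(1-σ₁)/(1-σ₁) + u^(-σ₁))^2) (Set.Ioo 0 1) := by
  set bound : ℝ → ℝ := fun t ↦ ((t + 1) ^ (1 - σ₁) / (1 - σ₁) + t ^ (-σ₁)) ^ 2
  have hbound : IntegrableOn bound (Ioo 0 1) := integrableOn_sq_add_rpow_neg h1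
  refine ⟨?_, hbound⟩
  rw [← integral_Ioc_comp_sub bound]
  refine integral_mono_of_nonneg (ae_of_all _ fun u ↦ sq_nonneg _)
    (integrableOn_Ioc_comp_sub hbound k) ?_
  filter_upwards [ae_restrict_mem measurableSet_Ioc] with u hu
  exact sq_rpowDefect_le h0.le (by linarith) hu.1

theorem stmt8 (σ₁ : ℝ) (h0 : 0 < σ₁) (h1 : σ₁ < 1/2) (k : ℕ) (hk : 1 ≤ k) :
    (∫ u in Set.Ioc (k : ℝ) (k+1),
        (u^(1-σ₁)/(1-σ₁) - ∑ n ∈ Finset.Icc 1 k, (u - (n:ℝ))^(-σ₁))^2)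
      ≤ (∫ u in Set.Ioo (0:ℝ) 1, ((u+1)^(1-σ₁)/(1-σ₁) + u^(-σ₁))^2)
    ∧ IntegrableOn (fun u : ℝ => ((u+1)^(1-σ₁)/(1-σ₁) + u^(-σ₁))^2) (Set.Ioo 0 1) :=
  stmt8_general σ₁ h0 h1 k
end

section
/- Let 0 < σ₁ < 1/2 and r > σ₁ with r ≠ 1. Define ψ(u) = u/(1−σ₁) − ∑_{n<u} (1−n/u)^{−σ₁}. Then ∫_1^∞ |ψ(u)|² u^{−1−2r} du ≤ C(σ₁) ζ(1 + 2(r−σ₁)), where C(σ₁) = 2^{3−2σ₁}/((3−2σ₁)(1−σ₁)²) + 2^{2−σ₁}/(1−σ₁)² + 1/(1−2σ₁). -/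
/-!
Since `(1 - n/u)^(-σ) = u^σ (u - n)^(-σ)`, we have `ψ(u) = u^σ φ(u)` with
`φ(u) = u^(1-σ)/(1-σ) - ∑_{n<u} (u - n)^(-σ)`. For `u ∈ (k, k+1]` and `t = u - k`,
comparing the sum `∑_{i<k} (t + i)^(-σ)` of the decreasing function `x^(-σ)` with
`∫_t^u x^(-σ) dx` traps `φ(u)` between `t^(1-σ)/(1-σ) - t^(-σ)` and `t^(1-σ)/(1-σ)`.
So on `(k, k+1]` the integrand is at most `k^(-1-2(r-σ)) (t^(1-σ)/(1-σ) + t^(-σ))^2`, whose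
integral is `k^(-1-2(r-σ))` times `1/((3-2σ)(1-σ)^2) + 1/(1-σ)^2 + 1/(1-2σ) ≤ C(σ)`.
Summing over `k` gives the bound.
-/

open MeasureTheory Set

noncomputable def psi (σ u : ℝ) : ℝ :=
  u / (1 - σ) - ∑ n ∈ Finset.Ico 1 ⌈u⌉₊, (1 - (n : ℝ) / u) ^ (-σ)

theorem rpow_div_sub_sum_rpow_mem_Icc {σ t : ℝ} (hσ0 : 0 ≤ σ) (hσ1 : σ ≠ 1) (ht : 0 < t)
    (k : ℕ) :
    (t + k) ^ (1 - σ) / (1 - σ) - ∑ i ∈ Finset.range k, (t + i) ^ (-σ) ∈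
      Icc (t ^ (1 - σ) / (1 - σ) - t ^ (-σ)) (t ^ (1 - σ) / (1 - σ)) := by
  have hanti : AntitoneOn (fun x : ℝ => x ^ (-σ)) (Icc t (t + k)) := fun x hx y _ hxy =>
    Real.rpow_le_rpow_of_nonpos (ht.trans_le hx.1) hxy (by linarith)
  have hint : ∫ x in t..t + k, x ^ (-σ) = ((t + k) ^ (1 - σ) - t ^ (1 - σ)) / (1 - σ) := by
    have h0 : (0 : ℝ) ∉ uIcc t (t + k) := by
      rw [uIcc_of_le (le_add_of_nonneg_right k.cast_nonneg)]; exact fun h => ht.not_ge h.1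
    rw [integral_rpow (Or.inr ⟨fun h => hσ1 (by linarith), h0⟩), neg_add_eq_sub]
  have hshift : ∑ i ∈ Finset.range k, (t + i) ^ (-σ) + (t + k) ^ (-σ)
      = t ^ (-σ) + ∑ i ∈ Finset.range k, (t + ↑(i + 1)) ^ (-σ) := by
    rw [← Finset.sum_range_succ (fun i : ℕ => (t + i) ^ (-σ)), Finset.sum_range_succ']
    simp [add_comm]
  have hlow := hanti.sum_le_integral
  have hupp := hanti.integral_le_sum
  have hpos : 0 ≤ (t + k) ^ (-σ) := Real.rpow_nonneg (by positivity) _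
  rw [hint, sub_div] at hlow hupp
  constructor <;> linarith

theorem sum_Ico_one_sub_eq_sum_range {M : Type*} [AddCommMonoid M] (f : ℝ → M) (k : ℕ)
    (u : ℝ) :
    ∑ n ∈ Finset.Ico 1 (k + 1), f (u - n) = ∑ i ∈ Finset.range k, f (u - k + i) := by
  rw [Finset.sum_Ico_eq_sum_range, add_tsub_cancel_right, ← Finset.sum_range_reflect]
  refine Finset.sum_congr rfl fun i hi => ?_
  have hi : i < k := Finset.mem_range.mp hi
  rw [Nat.cast_add, Nat.cast_sub (by omega), Nat.cast_sub (by omega)]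
  congr 1
  push_cast
  ring

theorem psi_eq_rpow_mul {σ u : ℝ} {k : ℕ} (hu : u ∈ Ioc (k : ℝ) (k + 1)) :
    psi σ u =
      u ^ σ * (u ^ (1 - σ) / (1 - σ) - ∑ i ∈ Finset.range k, (u - k + i) ^ (-σ)) := by
  have hu0 : 0 < u := k.cast_nonneg.trans_lt hu.1
  have hceil : ⌈u⌉₊ = k + 1 := by
    rw [Nat.ceil_eq_iff k.succ_ne_zero]
    push_cast
    exact ⟨by linarith [hu.1], hu.2⟩
  have hterm : ∀ n ∈ Finset.Ico 1 (k + 1),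
      (1 - (n : ℝ) / u) ^ (-σ) = u ^ σ * (u - n) ^ (-σ) := by
    intro n hn
    have hn : (n : ℝ) < u := by
      have : n ≤ k := Nat.lt_succ_iff.mp (Finset.mem_Ico.mp hn).2
      exact (Nat.cast_le.mpr this).trans_lt hu.1
    rw [show 1 - (n : ℝ) / u = (u - n) / u by field_simp, Real.div_rpow (by linarith) hu0.le,
      Real.rpow_neg hu0.le, div_inv_eq_mul, mul_comm]
  rw [psi, hceil, Finset.sum_congr rfl hterm, ← Finset.mul_sum,
    sum_Ico_one_sub_eq_sum_range (· ^ (-σ)), mul_sub, ← mul_div_assoc, ← Real.rpow_add hu0]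
  simp

theorem sq_rpow_div_add_rpow {σ t : ℝ} (ht : 0 < t) :
    (t ^ (1 - σ) / (1 - σ) + t ^ (-σ)) ^ 2
      = t ^ (2 - 2 * σ) / (1 - σ) ^ 2 + 2 * t ^ (1 - 2 * σ) / (1 - σ) + t ^ (-(2 * σ)) := by
  have e1 : t ^ (2 - 2 * σ) = t ^ (1 - σ) * t ^ (1 - σ) := by rw [← Real.rpow_add ht]; ring_nf
  have e2 : t ^ (1 - 2 * σ) = t ^ (1 - σ) * t ^ (-σ) := by rw [← Real.rpow_add ht]; ring_nf
  have e3 : t ^ (-(2 * σ)) = t ^ (-σ) * t ^ (-σ) := by rw [← Real.rpow_add ht]; ring_nf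
  rw [e1, e2, e3, add_sq, div_pow]
  ring

theorem sq_rpow_div_add_rpow_eqOn {σ : ℝ} :
    EqOn (fun t : ℝ => (t ^ (1 - σ) / (1 - σ) + t ^ (-σ)) ^ 2)
      (fun t => t ^ (2 - 2 * σ) / (1 - σ) ^ 2 + 2 * t ^ (1 - 2 * σ) / (1 - σ) + t ^ (-(2 * σ)))
      (uIoo 0 1) := fun _ ht => sq_rpow_div_add_rpow (uIoo_of_le (zero_le_one' ℝ) ▸ ht).1

theorem intervalIntegrable_sq_rpow_div_add_rpow {σ : ℝ} (hσ : σ < 1 / 2) :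
    IntervalIntegrable (fun t : ℝ => (t ^ (1 - σ) / (1 - σ) + t ^ (-σ)) ^ 2) volume 0 1 := by
  refine IntervalIntegrable.congr_uIoo ?_ sq_rpow_div_add_rpow_eqOn.symm
  refine ((IntervalIntegrable.div_const ?_ _).add
    ((IntervalIntegrable.const_mul ?_ 2).div_const _)).add ?_
  all_goals exact intervalIntegral.intervalIntegrable_rpow' (by linarith)

theorem integral_sq_rpow_div_add_rpow {σ : ℝ} (hσ : σ < 1 / 2) :
    ∫ t in (0 : ℝ)..1, (t ^ (1 - σ) / (1 - σ) + t ^ (-σ)) ^ 2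
      = 1 / ((3 - 2 * σ) * (1 - σ) ^ 2) + 1 / (1 - σ) ^ 2 + 1 / (1 - 2 * σ) := by
  have hI : ∀ {s : ℝ}, -1 < s → ∫ t in (0 : ℝ)..1, t ^ s = 1 / (s + 1) := fun hs => by
    rw [integral_rpow (Or.inl hs), Real.one_rpow, Real.zero_rpow (by linarith), sub_zero]
  have e₁ : (-1 : ℝ) < 2 - 2 * σ := by linarith
  have e₂ : (-1 : ℝ) < 1 - 2 * σ := by linarith
  have e₃ : (-1 : ℝ) < -(2 * σ) := by linarith
  have i₁ := (intervalIntegral.intervalIntegrable_rpow' e₁ (a := 0) (b := 1)).div_const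
    ((1 - σ) ^ 2)
  have i₂ := ((intervalIntegral.intervalIntegrable_rpow' e₂ (a := 0) (b := 1)).const_mul
    2).div_const (1 - σ)
  have i₃ := intervalIntegral.intervalIntegrable_rpow' e₃ (a := 0) (b := 1)
  rw [intervalIntegral.integral_congr_uIoo sq_rpow_div_add_rpow_eqOn,
    intervalIntegral.integral_add (i₁.add i₂) i₃, intervalIntegral.integral_add i₁ i₂,
    intervalIntegral.integral_div, intervalIntegral.integral_div,
    intervalIntegral.integral_const_mul, hI e₁, hI e₂, hI e₃,
    show (2 : ℝ) - 2 * σ + 1 = 3 - 2 * σ by ring,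
    show (1 : ℝ) - 2 * σ + 1 = 2 * (1 - σ) by ring, neg_add_eq_sub]
  have h₁ : (1 : ℝ) - σ ≠ 0 := by linarith
  have h₂ : (3 : ℝ) - 2 * σ ≠ 0 := by linarith
  have h₃ : (1 : ℝ) - 2 * σ ≠ 0 := by linarith
  field_simp

theorem Ioi_one_subset_iUnion_Ioc : Ioi (1 : ℝ) ⊆ ⋃ n : ℕ, Ioc ((n : ℝ) + 1) (n + 2) := by
  intro u hu
  have hceil : 2 ≤ ⌈u⌉₊ := Nat.lt_ceil.mpr (by exact_mod_cast hu)
  refine mem_iUnion.mpr ⟨⌈u⌉₊ - 2, ?_, ?_⟩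
  · have := Nat.ceil_lt_add_one (zero_lt_one.trans (mem_Ioi.mp hu)).le
    rw [Nat.cast_sub hceil]; push_cast; linarith
  · have := Nat.le_ceil u
    rw [Nat.cast_sub hceil]; push_cast; linarith

theorem setIntegral_Ioi_one_le_tsum {f : ℝ → ℝ} {g : ℕ → ℝ → ℝ}
    (hf : ∀ u ∈ Ioi (1 : ℝ), 0 ≤ f u)
    (hfg : ∀ n : ℕ, ∀ u ∈ Ioc ((n : ℝ) + 1) (n + 2), f u ≤ g n u)
    (hg : ∀ n : ℕ, IntegrableOn (g n) (Ioc ((n : ℝ) + 1) (n + 2)))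
    (hsum : Summable fun n : ℕ => ∫ u in Ioc ((n : ℝ) + 1) (n + 2), g n u) :
    ∫ u in Ioi 1, f u ≤ ∑' n : ℕ, ∫ u in Ioc ((n : ℝ) + 1) (n + 2), g n u := by
  have hIoc : ∀ n : ℕ, Ioc ((n : ℝ) + 1) (n + 2) ⊆ Ioi 1 := fun n u hu =>
    lt_of_le_of_lt (by simp) hu.1
  have hg0 : ∀ n : ℕ, ∀ u ∈ Ioc ((n : ℝ) + 1) (n + 2), 0 ≤ g n u := fun n u hu =>
    (hf u (hIoc n hu)).trans (hfg n u hu)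
  have hint0 : ∀ n : ℕ, 0 ≤ ∫ u in Ioc ((n : ℝ) + 1) (n + 2), g n u := fun n =>
    setIntegral_nonneg measurableSet_Ioc (hg0 n)
  by_cases hfi : IntegrableOn f (Ioi 1)
  swap
  · rw [integral_undef hfi]
    exact tsum_nonneg hint0
  rw [integral_eq_lintegral_of_nonneg_ae
    ((ae_restrict_iff' measurableSet_Ioi).mpr (ae_of_all _ hf)) hfi.aestronglyMeasurable]
  refine ENNReal.toReal_le_of_le_ofReal (tsum_nonneg hint0) ?_
  calc ∫⁻ u in Ioi 1, ENNReal.ofReal (f u)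
      ≤ ∫⁻ u in ⋃ n : ℕ, Ioc ((n : ℝ) + 1) (n + 2), ENNReal.ofReal (f u) :=
        lintegral_mono_set Ioi_one_subset_iUnion_Ioc
    _ ≤ ∑' n : ℕ, ∫⁻ u in Ioc ((n : ℝ) + 1) (n + 2), ENNReal.ofReal (f u) :=
        lintegral_iUnion_le _ _
    _ ≤ ∑' n : ℕ, ENNReal.ofReal (∫ u in Ioc ((n : ℝ) + 1) (n + 2), g n u) := by
        refine ENNReal.tsum_le_tsum fun n => ?_
        rw [ofReal_integral_eq_lintegral_ofReal (hg n)
          ((ae_restrict_iff' measurableSet_Ioc).mpr (ae_of_all _ (hg0 n)))]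
        exact setLIntegral_mono' measurableSet_Ioc fun u hu =>
          ENNReal.ofReal_le_ofReal (hfg n u hu)
    _ = ENNReal.ofReal (∑' n : ℕ, ∫ u in Ioc ((n : ℝ) + 1) (n + 2), g n u) :=
        (ENNReal.ofReal_tsum_of_nonneg hint0 hsum).symm

theorem sq_psi_mul_rpow_le {σ r u : ℝ} {k : ℕ} (hσ0 : 0 ≤ σ) (hσ1 : σ < 1)
    (hrσ : 0 ≤ 1 + 2 * (r - σ)) (hk : 0 < k) (hu : u ∈ Ioc (k : ℝ) (k + 1)) :
    psi σ u ^ 2 * u ^ (-1 - 2 * r)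
      ≤ (k : ℝ) ^ (-(1 + 2 * (r - σ))) *
          ((u - k) ^ (1 - σ) / (1 - σ) + (u - k) ^ (-σ)) ^ 2 := by
  have hk0 : (0 : ℝ) < k := Nat.cast_pos.mpr hk
  have hu0 : 0 < u := hk0.trans hu.1
  have ht : 0 < u - k := sub_pos.mpr hu.1
  obtain ⟨hlo, hhi⟩ := rpow_div_sub_sum_rpow_mem_Icc hσ0 hσ1.ne ht k
  rw [sub_add_cancel] at hlo hhi
  have hA : 0 ≤ (u - k) ^ (1 - σ) / (1 - σ) :=
    div_nonneg (Real.rpow_nonneg ht.le _) (by linarith)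
  have hB : 0 ≤ (u - k) ^ (-σ) := Real.rpow_nonneg ht.le _
  have hpow : (u ^ σ) ^ 2 * u ^ (-1 - 2 * r) = u ^ (-(1 + 2 * (r - σ))) := by
    rw [← Real.rpow_natCast, ← Real.rpow_mul hu0.le, ← Real.rpow_add hu0]
    ring_nf
  set φ := u ^ (1 - σ) / (1 - σ) - ∑ i ∈ Finset.range k, (u - k + i) ^ (-σ)
  calc psi σ u ^ 2 * u ^ (-1 - 2 * r) = u ^ (-(1 + 2 * (r - σ))) * φ ^ 2 := by
        rw [psi_eq_rpow_mul hu, mul_pow, mul_right_comm, hpow, mul_comm]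
    _ ≤ _ := mul_le_mul (Real.rpow_le_rpow_of_nonpos hk0 hu.1.le (by linarith))
        (sq_le_sq' (by linarith) (by linarith)) (sq_nonneg _) (Real.rpow_nonneg hk0.le _)

theorem integrableOn_Ioc_sq_rpow_div_add_rpow_sub {σ : ℝ} (hσ : σ < 1 / 2) (c : ℝ) :
    IntegrableOn (fun u : ℝ => ((u - c) ^ (1 - σ) / (1 - σ) + (u - c) ^ (-σ)) ^ 2)
      (Ioc c (c + 1)) := by
  have h := (intervalIntegrable_sq_rpow_div_add_rpow hσ).comp_sub_right c
  rw [zero_add, add_comm 1 c] at h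
  exact (intervalIntegrable_iff_integrableOn_Ioc_of_le (by linarith)).mp h

theorem setIntegral_Ioc_sq_rpow_div_add_rpow_sub {σ : ℝ} (hσ : σ < 1 / 2) (c : ℝ) :
    ∫ u in Ioc c (c + 1), ((u - c) ^ (1 - σ) / (1 - σ) + (u - c) ^ (-σ)) ^ 2
      = 1 / ((3 - 2 * σ) * (1 - σ) ^ 2) + 1 / (1 - σ) ^ 2 + 1 / (1 - 2 * σ) := by
  rw [← intervalIntegral.integral_of_le (by linarith),
    intervalIntegral.integral_comp_sub_right (fun t => (t ^ (1 - σ) / (1 - σ) + t ^ (-σ)) ^ 2),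
    sub_self, add_sub_cancel_left]
  exact integral_sq_rpow_div_add_rpow hσ

theorem stmt9_general (σ₁ r : ℝ) (h0 : 0 < σ₁) (h1 : σ₁ < 1/2) (hr : σ₁ < r) :
    (∫ u in Set.Ioi (1:ℝ),
        (u/(1-σ₁) - ∑ n ∈ Finset.Ico 1 ⌈u⌉₊, (1 - (n:ℝ)/u)^(-σ₁))^2 * u^(-1-2*r))
      ≤ (2^(3-2*σ₁)/((3-2*σ₁)*(1-σ₁)^2) + 2^(2-σ₁)/(1-σ₁)^2 + 1/(1-2*σ₁))
          * ∑' n : ℕ, ((n:ℝ)+1)^(-(1+2*(r-σ₁))) := by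
  set s := 1 + 2 * (r - σ₁)
  set C₀ := 1 / ((3 - 2 * σ₁) * (1 - σ₁) ^ 2) + 1 / (1 - σ₁) ^ 2 + 1 / (1 - 2 * σ₁)
  set g : ℕ → ℝ → ℝ := fun n u => ((n : ℝ) + 1) ^ (-s) *
    ((u - (n + 1)) ^ (1 - σ₁) / (1 - σ₁) + (u - (n + 1)) ^ (-σ₁)) ^ 2
  have hn2 : ∀ n : ℕ, (n : ℝ) + 2 = n + 1 + 1 := fun n => by ring
  have hg : ∀ n : ℕ,
      ∫ u in Ioc ((n : ℝ) + 1) (n + 2), g n u = C₀ * ((n : ℝ) + 1) ^ (-s) := fun n => by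
    rw [integral_const_mul, hn2, setIntegral_Ioc_sq_rpow_div_add_rpow_sub h1, mul_comm]
  have hsum : Summable fun n : ℕ => ((n : ℝ) + 1) ^ (-s) := by
    simpa using (summable_nat_add_iff 1).mpr (Real.summable_nat_rpow.mpr (by linarith))
  have hC : C₀ ≤
      2 ^ (3 - 2 * σ₁) / ((3 - 2 * σ₁) * (1 - σ₁) ^ 2) + 2 ^ (2 - σ₁) / (1 - σ₁) ^ 2
        + 1 / (1 - 2 * σ₁) := by
    have h3 : 0 < (3 - 2 * σ₁) * (1 - σ₁) ^ 2 := by nlinarith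
    gcongr ?_ / _ + ?_ / _ + _ <;> exact Real.one_le_rpow one_le_two (by linarith)
  calc _ ≤ ∑' n : ℕ, ∫ u in Ioc ((n : ℝ) + 1) (n + 2), g n u := by
        refine setIntegral_Ioi_one_le_tsum
          (fun u hu => mul_nonneg (sq_nonneg _) (Real.rpow_nonneg (zero_lt_one.trans hu).le _))
          (fun n u hu => ?_)
          (fun n => by rw [hn2]; exact (integrableOn_Ioc_sq_rpow_div_add_rpow_sub h1 _).const_mul _)
          ((hsum.mul_left C₀).congr fun n => (hg n).symm)
        have := sq_psi_mul_rpow_le h0.le (by linarith) (by linarith) n.succ_pos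
          (u := u) (r := r) ⟨by push_cast; exact hu.1, by push_cast; linarith [hu.2]⟩
        push_cast at this
        exact this
    _ = C₀ * ∑' n : ℕ, ((n : ℝ) + 1) ^ (-s) := by
        rw [← tsum_mul_left]; exact tsum_congr hg
    _ ≤ _ := mul_le_mul_of_nonneg_right hC (tsum_nonneg fun n => by positivity)

theorem stmt9 (σ₁ r : ℝ) (h0 : 0 < σ₁) (h1 : σ₁ < 1/2) (hr : σ₁ < r) (hr1 : r ≠ 1) :
    (∫ u in Set.Ioi (1:ℝ),
        (u/(1-σ₁) - ∑ n ∈ Finset.Ico 1 ⌈u⌉₊, (1 - (n:ℝ)/u)^(-σ₁))^2 * u^(-1-2*r))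
      ≤ (2^(3-2*σ₁)/((3-2*σ₁)*(1-σ₁)^2) + 2^(2-σ₁)/(1-σ₁)^2 + 1/(1-2*σ₁))
          * ∑' n : ℕ, ((n:ℝ)+1)^(-(1+2*(r-σ₁))) :=
  stmt9_general σ₁ r h0 h1 hr
end

section
/- Let χ be a non-principal Dirichlet character modulo q with L(χ,1) ≠ 0, and let 1/2 ≤ r < 1. Then inf over c ∈ ℂ and α ∈ (0,1] of ∫_0^1 |t^{1−r} − c t^r ∑_{n<α/t} χ(n)|² dt/t is strictly less than 1/(2−2r). -/
/-!
Write `ψ(u) = ∑_{1 ≤ n < u} χ(n)`; it is bounded by `q` since `χ` sums to `0` over every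
complete residue system. With `α = 1` the integral expands as
`1/(2-2r) - 2 Re(c ∫₀¹ ψ(1/t) dt) + |c|² ∫₀¹ t^(2r-1) |ψ(1/t)|² dt`, and the last term is `O(|c|²)`
because `r ≥ 1/2`. So a small `c` with `Re(c ∫₀¹ ψ(1/t) dt) > 0` beats `1/(2-2r)` as soon as
`∫₀¹ ψ(1/t) dt ≠ 0`. In fact `∫₀¹ ψ(1/t) dt = L(χ,1)`: for `s > 1`, integrating the absolutely
convergent Dirichlet series term by term gives `∫₀¹ t^(s-1) ψ(1/t) dt = L(χ,s)/s`, and both sides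
are continuous as `s → 1⁺` (dominated convergence on the left, analyticity of `L(χ,·)` on the
right).
-/

open MeasureTheory Set Filter Topology

/-- Since `n < ⌈u⌉₊ ↔ n < u`, this is `∑_{1 ≤ n < u} f n`. -/
noncomputable def sumBelow (f : ℕ → ℂ) (u : ℝ) : ℂ := ∑ n ∈ Finset.Ico 1 ⌈u⌉₊, f n

theorem measurable_sumBelow (f : ℕ → ℂ) : Measurable (sumBelow f) :=
  (measurable_from_nat (f := fun N => ∑ n ∈ Finset.Ico 1 N, f n)).comp measurable_id.nat_ceil

theorem mem_Ico_one_ceil_one_div_iff {t : ℝ} (ht : 0 < t) {n : ℕ} :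
    n ∈ Finset.Ico 1 ⌈1 / t⌉₊ ↔ t < (n : ℝ)⁻¹ := by
  rw [Finset.mem_Ico, Nat.lt_ceil, one_div]
  rcases Nat.eq_zero_or_pos n with rfl | hn
  · simp [ht.le]
  · rw [lt_inv_comm₀ (by positivity) ht]
    simp [Nat.one_le_iff_ne_zero, hn.ne']

theorem integral_Ioo_zero_rpow_sub_one {x a : ℝ} (hx : 0 < x) (ha : 0 ≤ a) :
    ∫ t in Ioo 0 a, t ^ (x - 1) = a ^ x / x := by
  rw [← integral_Ioc_eq_integral_Ioo,
    ← intervalIntegral.integral_of_le ha, integral_rpow (Or.inl (by linarith)),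
    sub_add_cancel, Real.zero_rpow hx.ne', sub_zero]

theorem LSeries.term_ofReal_eq_inv_rpow_mul (f : ℕ → ℂ) {x : ℝ} (hx : x ≠ 0) (n : ℕ) :
    LSeries.term f x n = (((n : ℝ)⁻¹ ^ x : ℝ) : ℂ) * f n := by
  rcases eq_or_ne n 0 with rfl | hn
  · simp [Real.zero_rpow hx]
  · rw [LSeries.term_of_ne_zero hn, Real.inv_rpow n.cast_nonneg, Complex.ofReal_inv,
      Complex.ofReal_cpow n.cast_nonneg, div_eq_inv_mul]
    norm_cast

theorem integral_rpow_mul_sumBelow_one_div {f : ℕ → ℂ} {x : ℝ} (hx : 1 < x)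
    (hf : LSeriesSummable f x) :
    ∫ t in Ioo (0 : ℝ) 1, ((t ^ (x - 1) : ℝ) : ℂ) * sumBelow f (1 / t) = LSeries f x / x := by
  have hx0 : 0 < x := by linarith
  set F : ℕ → ℝ → ℂ := fun n t =>
    (((Ioo 0 (n : ℝ)⁻¹).indicator (fun t : ℝ => t ^ (x - 1)) t : ℝ) : ℂ) * f n
  have hind : ∀ n : ℕ, ∫ t in Ioo (0 : ℝ) 1, (Ioo 0 (n : ℝ)⁻¹).indicator (fun t => t ^ (x - 1)) t
      = (n : ℝ)⁻¹ ^ x / x := fun n => by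
    rw [integral_indicator measurableSet_Ioo, Measure.restrict_restrict measurableSet_Ioo,
      Ioo_inter_Ioo, max_self, min_eq_left (Nat.cast_inv_le_one n)]
    exact integral_Ioo_zero_rpow_sub_one hx0 (by positivity)
  have hint : ∀ n, Integrable (F n) (volume.restrict (Ioo 0 1)) := fun n =>
    (((intervalIntegral.intervalIntegrable_rpow' (by linarith)).1.mono_set
      Ioo_subset_Ioc_self).indicator measurableSet_Ioo).ofReal.mul_const _
  have hintegral : ∀ n, ∫ t in Ioo (0 : ℝ) 1, F n t = LSeries.term f x n / x := fun n => by
    rw [integral_mul_const, integral_complex_ofReal, hind,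
      LSeries.term_ofReal_eq_inv_rpow_mul f hx0.ne']
    push_cast
    ring
  have hnorm : ∀ n, ∫ t in Ioo (0 : ℝ) 1, ‖F n t‖ = ‖LSeries.term f x n‖ / x := fun n => by
    have hnonneg : ∀ t, 0 ≤ (Ioo 0 (n : ℝ)⁻¹).indicator (fun t : ℝ => t ^ (x - 1)) t :=
      indicator_nonneg fun t ht => Real.rpow_nonneg ht.1.le _
    simp only [F, norm_mul, Complex.norm_real, Real.norm_of_nonneg (hnonneg _)]
    rw [integral_mul_const, hind, LSeries.term_ofReal_eq_inv_rpow_mul f hx0.ne', norm_mul,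
      Complex.norm_real, Real.norm_of_nonneg (by positivity)]
    ring
  have hsum : ∀ t ∈ Ioo (0 : ℝ) 1,
      ∑' n, F n t = ((t ^ (x - 1) : ℝ) : ℂ) * sumBelow f (1 / t) := by
    intro t ht
    have hF : ∀ n,
        F n t = if n ∈ Finset.Ico 1 ⌈1 / t⌉₊ then ((t ^ (x - 1) : ℝ) : ℂ) * f n else 0 := by
      intro n
      simp only [F, indicator_apply, mem_Ioo, ht.1, true_and, mem_Ico_one_ceil_one_div_iff ht.1]
      split_ifs <;> simp
    rw [tsum_eq_sum (s := Finset.Ico 1 ⌈1 / t⌉₊) fun n hn => by rw [hF, if_neg hn],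
      Finset.sum_congr rfl fun n hn => by rw [hF, if_pos hn], sumBelow, Finset.mul_sum]
  rw [← setIntegral_congr_fun measurableSet_Ioo hsum,
    ← integral_tsum_of_summable_integral_norm hint, LSeries, ← tsum_div_const]
  · exact tsum_congr hintegral
  · simp only [hnorm]
    exact (summable_norm_iff.mpr hf).div_const x

theorem tendsto_LSeries_div_nhdsGT_one {f : ℕ → ℂ} {C : ℝ} (hC : ∀ u, ‖sumBelow f u‖ ≤ C)
    (hf : ∀ x : ℝ, 1 < x → LSeriesSummable f x) :
    Tendsto (fun x : ℝ => LSeries f x / x) (𝓝[>] 1)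
      (𝓝 (∫ t in Ioo (0 : ℝ) 1, sumBelow f (1 / t))) := by
  have hlim : Tendsto
      (fun x : ℝ => ∫ t in Ioo (0 : ℝ) 1, ((t ^ (x - 1) : ℝ) : ℂ) * sumBelow f (1 / t)) (𝓝[>] 1)
      (𝓝 (∫ t in Ioo (0 : ℝ) 1, sumBelow f (1 / t))) := by
    have hg : Measurable fun t : ℝ => sumBelow f (1 / t) :=
      (measurable_sumBelow f).comp (measurable_const.div measurable_id)
    refine tendsto_integral_filter_of_dominated_convergence (fun _ => C)
      (Eventually.of_forall fun x => ?_) ?_ (integrable_const C) ?_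
    · exact ((Complex.measurable_ofReal.comp (measurable_id.pow_const _)).mul
        hg).aestronglyMeasurable
    · filter_upwards [self_mem_nhdsWithin] with x hx
      filter_upwards [self_mem_ae_restrict measurableSet_Ioo] with t ht
      rw [norm_mul, Complex.norm_real, Real.norm_of_nonneg (Real.rpow_nonneg ht.1.le _)]
      exact (mul_le_of_le_one_left (norm_nonneg _)
        (Real.rpow_le_one ht.1.le ht.2.le (by linarith [mem_Ioi.mp hx]))).trans (hC _)
    · filter_upwards [self_mem_ae_restrict measurableSet_Ioo] with t ht
      have : ContinuousAt (fun x : ℝ => ((t ^ (x - 1) : ℝ) : ℂ) * sumBelow f (1 / t)) 1 :=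
        (Complex.continuous_ofReal.continuousAt.comp
          ((Real.continuousAt_const_rpow ht.1.ne').comp
            (continuous_id.sub continuous_const).continuousAt)).mul continuousAt_const
      simpa using this.tendsto.mono_left nhdsWithin_le_nhds
  refine hlim.congr' ?_
  filter_upwards [self_mem_nhdsWithin] with x hx
    using integral_rpow_mul_sumBelow_one_div hx (hf x hx)

theorem ZMod.sum_Ico_add_natCast {M : Type*} [AddCommMonoid M] (q : ℕ) [NeZero q]
    (g : ZMod q → M) (m : ℕ) : ∑ n ∈ Finset.Ico m (m + q), g n = ∑ x, g x := by
  rw [Finset.sum_Ico_eq_sum_range, Nat.add_sub_cancel_left,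
    ← Fintype.sum_equiv (Equiv.addLeft (m : ZMod q)) (fun x => g (m + x)) g fun _ => rfl]
  refine Finset.sum_nbij' (fun i => (i : ZMod q)) ZMod.val (fun _ _ => Finset.mem_univ _)
    (fun x _ => Finset.mem_range.mpr x.val_lt) (fun i hi => ZMod.val_cast_of_lt
      (Finset.mem_range.mp hi)) (fun x _ => ZMod.natCast_zmod_val x) fun i _ => by push_cast; rfl

namespace DirichletCharacter

variable {q : ℕ} [NeZero q] {χ : DirichletCharacter ℂ q}

theorem norm_sum_Ico_one_le (hχ : χ ≠ 1) (N : ℕ) : ‖∑ n ∈ Finset.Ico 1 N, χ n‖ ≤ q := by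
  induction N using Nat.strong_induction_on with
  | _ N ih =>
    rcases le_or_gt N q with hN | hN
    · calc ‖∑ n ∈ Finset.Ico 1 N, χ n‖ ≤ ∑ n ∈ Finset.Ico 1 N, ‖χ n‖ := norm_sum_le _ _
        _ ≤ ∑ _n ∈ Finset.Ico 1 N, (1 : ℝ) := Finset.sum_le_sum fun n _ => χ.norm_le_one _
        _ ≤ q := by simp; omega
    · -- drop the last `q` terms, which form a complete residue system
      obtain ⟨M, rfl⟩ : ∃ M, N = M + q := ⟨N - q, by omega⟩
      rw [← Finset.sum_Ico_consecutive _ (by omega : 1 ≤ M) (by omega : M ≤ M + q),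
        ZMod.sum_Ico_add_natCast q χ, MulChar.sum_eq_zero_of_ne_one hχ, add_zero]
      exact ih M (Nat.lt_add_of_pos_right (NeZero.pos q))

theorem norm_sumBelow_le (hχ : χ ≠ 1) (u : ℝ) : ‖sumBelow (fun n => χ n) u‖ ≤ q :=
  norm_sum_Ico_one_le hχ _

theorem integral_sumBelow_one_div_eq_LFunction_one (hχ : χ ≠ 1) :
    ∫ t in Ioo (0 : ℝ) 1, sumBelow (fun n => χ n) (1 / t) = χ.LFunction 1 := by
  have hcont : ContinuousAt (fun x : ℝ => χ.LFunction x / x) 1 :=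
    ((differentiable_LFunction hχ).continuous.continuousAt.comp
      Complex.continuous_ofReal.continuousAt).div Complex.continuous_ofReal.continuousAt
      one_ne_zero
  refine tendsto_nhds_unique (tendsto_LSeries_div_nhdsGT_one (norm_sumBelow_le hχ)
    fun x hx => χ.LSeriesSummable_of_one_lt_re (by simpa using hx)) ?_
  have hL : (fun x : ℝ => χ.LFunction x / x)
      =ᶠ[𝓝[>] 1] fun x : ℝ => LSeries (fun n => χ n) x / x := by
    filter_upwards [self_mem_nhdsWithin] with x hx
    rw [χ.LFunction_eq_LSeries (by simpa using hx)]
  simpa using (hcont.tendsto.mono_left nhdsWithin_le_nhds).congr' hL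

end DirichletCharacter

theorem norm_rpow_sub_rpow_mul_sq_div_le {r t C : ℝ} (hr : 1 / 2 ≤ r) (ht : t ∈ Ioo 0 1) {w : ℂ}
    (hw : ‖w‖ ≤ C) :
    ‖((t ^ (1 - r) : ℝ) : ℂ) - (t ^ r : ℝ) * w‖ ^ 2 / t ≤ t ^ (1 - 2 * r) - 2 * w.re + C ^ 2 := by
  have ht0 := ht.1
  have hexpand : ‖((t ^ (1 - r) : ℝ) : ℂ) - (t ^ r : ℝ) * w‖ ^ 2
      = (t ^ (1 - r)) ^ 2 - 2 * (t ^ (1 - r) * t ^ r) * w.re + (t ^ r) ^ 2 * ‖w‖ ^ 2 := by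
    simp only [Complex.sq_norm, Complex.normSq_apply, Complex.sub_re, Complex.sub_im,
      Complex.mul_re, Complex.mul_im, Complex.ofReal_re, Complex.ofReal_im]
    ring
  have h1 : (t ^ (1 - r)) ^ 2 = t ^ (1 - 2 * r) * t := by
    rw [← Real.rpow_natCast, ← Real.rpow_mul ht0.le, ← Real.rpow_add_one ht0.ne']; ring_nf
  have h2 : t ^ (1 - r) * t ^ r = t := by
    rw [← Real.rpow_add ht0, sub_add_cancel, Real.rpow_one]
  have h3 : (t ^ r) ^ 2 = t ^ (2 * r - 1) * t := by
    rw [← Real.rpow_natCast, ← Real.rpow_mul ht0.le, ← Real.rpow_add_one ht0.ne']; ring_nf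
  have hsmall : t ^ (2 * r - 1) * ‖w‖ ^ 2 ≤ C ^ 2 :=
    (mul_le_of_le_one_left (by positivity) (Real.rpow_le_one ht0.le ht.2.le (by linarith))).trans
      (pow_le_pow_left₀ (norm_nonneg w) hw 2)
  rw [hexpand, h1, h2, h3, div_le_iff₀ ht0]
  nlinarith

section QuadraticBound

variable {r C : ℝ} {g : ℝ → ℂ}

theorem integral_norm_rpow_sub_mul_sq_div_le (hr : 1 / 2 ≤ r) (hr1 : r < 1) (hg : Measurable g)
    (hC : ∀ t, ‖g t‖ ≤ C) (c : ℂ) :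
    ∫ t in Ioo (0 : ℝ) 1, ‖((t ^ (1 - r) : ℝ) : ℂ) - c * (t ^ r : ℝ) * g t‖ ^ 2 / t
      ≤ 1 / (2 - 2 * r) - 2 * (c * ∫ t in Ioo (0 : ℝ) 1, g t).re + (‖c‖ * C) ^ 2 := by
  have hpow : IntegrableOn (fun t : ℝ => t ^ (1 - 2 * r)) (Ioo 0 1) :=
    (intervalIntegral.intervalIntegrable_rpow' (by linarith)).1.mono_set Ioo_subset_Ioc_self
  have hcg : Integrable (fun t => c * g t) (volume.restrict (Ioo 0 1)) :=
    (Integrable.of_bound hg.aestronglyMeasurable C (Eventually.of_forall hC)).const_mul c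
  have hre : Integrable (fun t => 2 * (c * g t).re) (volume.restrict (Ioo 0 1)) :=
    hcg.re.const_mul 2
  have hbound : IntegrableOn (fun t : ℝ => t ^ (1 - 2 * r) - 2 * (c * g t).re + (‖c‖ * C) ^ 2)
      (Ioo 0 1) := (hpow.sub hre).add (integrable_const _)
  have hvalue : ∫ t in Ioo (0 : ℝ) 1, t ^ (1 - 2 * r) - 2 * (c * g t).re + (‖c‖ * C) ^ 2
      = 1 / (2 - 2 * r) - 2 * (c * ∫ t in Ioo (0 : ℝ) 1, g t).re + (‖c‖ * C) ^ 2 := by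
    have hpow_val : ∫ t in Ioo (0 : ℝ) 1, t ^ (1 - 2 * r) = 1 / (2 - 2 * r) := by
      have := integral_Ioo_zero_rpow_sub_one (x := 2 - 2 * r) (by linarith) zero_le_one
      rwa [show 2 - 2 * r - 1 = 1 - 2 * r by ring, Real.one_rpow] at this
    have hre_val : ∫ t in Ioo (0 : ℝ) 1, (c * g t).re = (c * ∫ t in Ioo (0 : ℝ) 1, g t).re := by
      rw [← integral_const_mul]
      exact integral_re hcg
    rw [integral_add (f := fun t => t ^ (1 - 2 * r) - 2 * (c * g t).re) (hpow.sub hre)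
      (integrable_const _), integral_sub hpow hre, integral_const_mul, hpow_val, hre_val]
    simp
  rw [← hvalue]
  refine integral_mono_of_nonneg ?_ hbound ?_
  · filter_upwards [self_mem_ae_restrict measurableSet_Ioo] with t ht
    exact div_nonneg (sq_nonneg _) ht.1.le
  · filter_upwards [self_mem_ae_restrict measurableSet_Ioo] with t ht
    rw [show c * ((t ^ r : ℝ) : ℂ) * g t = ((t ^ r : ℝ) : ℂ) * (c * g t) by ring]
    exact norm_rpow_sub_rpow_mul_sq_div_le hr ht
      ((norm_mul_le c (g t)).trans (mul_le_mul_of_nonneg_left (hC t) (norm_nonneg c)))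

theorem exists_integral_norm_rpow_sub_mul_sq_div_lt (hr : 1 / 2 ≤ r) (hr1 : r < 1)
    (hg : Measurable g) (hC : ∀ t, ‖g t‖ ≤ C) (hg0 : ∫ t in Ioo (0 : ℝ) 1, g t ≠ 0) :
    ∃ c : ℂ, ∫ t in Ioo (0 : ℝ) 1, ‖((t ^ (1 - r) : ℝ) : ℂ) - c * (t ^ r : ℝ) * g t‖ ^ 2 / t
      < 1 / (2 - 2 * r) := by
  set I := ∫ t in Ioo (0 : ℝ) 1, g t
  -- `c = ε * conj I` gains `2 ε ‖I‖²` in the cross term and loses at most `ε² ‖I‖² C²`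
  set ε : ℝ := 1 / (C ^ 2 + 1)
  have hε : 0 < ε := by positivity
  have hεC : ε * C ^ 2 < 1 := by
    rw [div_mul_eq_mul_div, one_mul, div_lt_one (by positivity)]
    linarith
  have hI : 0 < ‖I‖ := norm_pos_iff.mpr hg0
  refine ⟨ε * starRingEnd ℂ I, (integral_norm_rpow_sub_mul_sq_div_le hr hr1 hg hC _).trans_lt ?_⟩
  have hre : (ε * starRingEnd ℂ I * I).re = ε * ‖I‖ ^ 2 := by
    rw [mul_assoc, Complex.conj_mul', ← Complex.ofReal_pow, ← Complex.ofReal_mul,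
      Complex.ofReal_re]
  have hnorm : ‖(ε : ℂ) * starRingEnd ℂ I‖ = ε * ‖I‖ := by
    rw [norm_mul, Complex.norm_real, Real.norm_of_nonneg hε.le, Complex.norm_conj]
  rw [hre, hnorm]
  nlinarith [mul_pos hε (pow_pos hI 2)]

end QuadraticBound

theorem stmt17 (q : ℕ) [NeZero q] (χ : DirichletCharacter ℂ q) (hχ : χ ≠ 1)
    (hL : DirichletCharacter.LFunction χ 1 ≠ 0) (r : ℝ) (hr : 1/2 ≤ r) (hr1 : r < 1) :
    sInf {x : ℝ | ∃ (c : ℂ) (α : ℝ), α ∈ Set.Ioc (0:ℝ) 1 ∧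
        x = ∫ t in Set.Ioo (0:ℝ) 1,
          ‖((t^(1-r) : ℝ) : ℂ) - c * ((t^r : ℝ) : ℂ)
            * ∑ n ∈ Finset.Ico 1 ⌈α/t⌉₊, χ (n : ZMod q)‖^2 / t}
      < 1/(2 - 2*r) := by
  obtain ⟨c, hc⟩ := exists_integral_norm_rpow_sub_mul_sq_div_lt
    (g := fun t => sumBelow (fun n => χ n) (1 / t)) hr hr1
    ((measurable_sumBelow _).comp (measurable_const.div measurable_id))
    (fun t => χ.norm_sumBelow_le hχ (1 / t))
    (by rwa [χ.integral_sumBelow_one_div_eq_LFunction_one hχ])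
  refine (csInf_le ⟨0, ?_⟩ ?_).trans_lt hc
  · rintro _ ⟨c, α, -, rfl⟩
    exact setIntegral_nonneg measurableSet_Ioo fun t ht => div_nonneg (sq_nonneg _) ht.1.le
  · exact ⟨c, 1, ⟨one_pos, le_rfl⟩, rfl⟩
end
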